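/- Let g be a symmetric positive definite 2×2 real matrix, μ an antisymmetric 2×2 real matrix, and h a symmetric 2×2 real matrix with trace(g⁻¹h) = 0. Then for every 2×2 real matrix B, trace((g⁻¹(Bᵀ·g + g·B))·(g⁻¹μ)·(g⁻¹h)) = 2·trace(B·(g⁻¹μ)·(g⁻¹h)). (The g-symmetrization of B can be replaced by 2B inside the trace against (g⁻¹μ)(g⁻¹h).) -/

import Mathlib

/-!
Write `A = g⁻¹μ` and `H = g⁻¹h`. In dimension two every antisymmetric `μ` satisfies
`μX + Xᵀμ = tr(X) μ`; applied to the trace-free `X = H` this makes `A` and `H` anticommute.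
The term `g⁻¹Bᵀg` of the symmetrization is the `g`-adjoint of `B`, and moving it across the
trace replaces `AH` by its `g`-adjoint `-HA = AH`, so both halves contribute `tr(BAH)`.
-/

open Matrix

namespace Matrix

theorem trace_inv_mul_transpose_mul_mul {n R : Type*} [Fintype n] [DecidableEq n] [CommRing R]
    {g : Matrix n n R} (hg : gᵀ = g) (B M : Matrix n n R) :
    trace (g⁻¹ * (Bᵀ * g) * M) = trace (B * (g⁻¹ * Mᵀ * g)) := by
  have hg' : (g⁻¹)ᵀ = g⁻¹ := by rw [transpose_nonsing_inv, hg]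
  calc trace (g⁻¹ * (Bᵀ * g) * M) = trace ((g⁻¹ * Bᵀ * (g * M))ᵀ) := by
        rw [trace_transpose, mul_assoc, mul_assoc, mul_assoc]
    _ = trace (B * (g⁻¹ * Mᵀ * g)) := by
        rw [transpose_mul, transpose_mul, transpose_mul, hg, hg', transpose_transpose,
          trace_mul_cycle, ← mul_assoc, ← mul_assoc]

section FinTwo

variable {R : Type*} [CommRing R]

theorem fin_two_mul_add_transpose_mul_of_transpose_eq_neg [IsAddTorsionFree R]
    {μ : Matrix (Fin 2) (Fin 2) R} (hμ : μᵀ = -μ) (X : Matrix (Fin 2) (Fin 2) R) :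
    μ * X + Xᵀ * μ = X.trace • μ := by
  have hμ_apply i j : μ i j = -μ j i := by simpa using congr_fun₂ hμ j i
  have h00 : μ 0 0 = 0 := self_eq_neg.mp (hμ_apply 0 0)
  have h11 : μ 1 1 = 0 := self_eq_neg.mp (hμ_apply 1 1)
  have h10 : μ 1 0 = -μ 0 1 := hμ_apply 1 0
  ext i j
  fin_cases i <;> fin_cases j <;>
    simp [mul_apply, trace_fin_two, h00, h11, h10] <;> ring

theorem fin_two_mul_mul_anticomm [IsAddTorsionFree R] {S μ h : Matrix (Fin 2) (Fin 2) R}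
    (hS : Sᵀ = S) (hμ : μᵀ = -μ) (hh : hᵀ = h) (htr : trace (S * h) = 0) :
    S * μ * (S * h) = -(S * h * (S * μ)) := by
  have hμSh : μ * (S * h) = -(h * S * μ) := by
    have := fin_two_mul_add_transpose_mul_of_transpose_eq_neg hμ (S * h)
    rw [htr, zero_smul, transpose_mul, hS, hh] at this
    exact eq_neg_of_add_eq_zero_left this
  rw [mul_assoc, hμSh]
  noncomm_ring

end FinTwo

end Matrix

/-- The `g`-symmetrization `Bᵀg + gB` of a matrix `B` can be replaced by `2B` inside the
trace against `(g⁻¹μ)(g⁻¹h)`, for `g` symmetric positive definite, `μ` antisymmetric and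
`h` symmetric with `tr(g⁻¹h) = 0`. -/
theorem stmt4 (g μ h : Matrix (Fin 2) (Fin 2) ℝ)
    (hg : g.PosDef) (hμ : μᵀ = -μ) (hs : h.IsSymm)
    (ht : Matrix.trace (g⁻¹ * h) = 0) (B : Matrix (Fin 2) (Fin 2) ℝ) :
    Matrix.trace ((g⁻¹ * (Bᵀ * g + g * B)) * (g⁻¹ * μ) * (g⁻¹ * h)) =
      2 * Matrix.trace (B * (g⁻¹ * μ) * (g⁻¹ * h)) := by
  have hgT : gᵀ = g := hg.isHermitian
  have hg_inv : g⁻¹ * g = 1 := nonsing_inv_mul g (isUnit_iff_ne_zero.2 hg.det_pos.ne')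
  have hginvT : (g⁻¹)ᵀ = g⁻¹ := by rw [transpose_nonsing_inv, hgT]
  have hadjoint : g⁻¹ * ((g⁻¹ * μ) * (g⁻¹ * h))ᵀ * g = (g⁻¹ * μ) * (g⁻¹ * h) := by
    rw [transpose_mul, transpose_mul, transpose_mul, hginvT, hμ, hs.eq]
    calc g⁻¹ * (h * g⁻¹ * (-μ * g⁻¹)) * g
        _ = -(g⁻¹ * h * g⁻¹ * μ * (g⁻¹ * g)) := by noncomm_ring
        _ = -(g⁻¹ * h * (g⁻¹ * μ)) := by rw [hg_inv]; noncomm_ring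
        _ = (g⁻¹ * μ) * (g⁻¹ * h) := (fin_two_mul_mul_anticomm hginvT hμ hs ht).symm
  rw [mul_add, add_mul, add_mul, trace_add, mul_assoc (g⁻¹ * (Bᵀ * g)),
    trace_inv_mul_transpose_mul_mul hgT, hadjoint, ← mul_assoc g⁻¹ g, hg_inv, one_mul,
    ← mul_assoc B, two_mul]
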